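/- Let T be a fully-resolved X-tree with a proper edge-weighting w, let g be a stable transversal for the collection 2^X of all nonempty subsets of X. For each cluster A ∈ clus(T), let e be the edge of T inducing the split A | (X − A), and let A_w ⊆ A be the set of leaves in A whose weighted path distance in T to e is maximal. Then the function f defined on clus(T) by f(A) := g(A_w) is a stable transversal for clus(T). -/

import Mathlib

open SimpleGraph

/-- An `X`-tree: a finite tree whose leaf set is (the image of) `X`,
with no vertices of degree 2. -/
structure XTree (α : Type) (X : Set α) where
  V : Type
  fintypeV : Fintype V
  tree : SimpleGraph V
  isTree : tree.IsTree
  ι : α → V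
  ι_injOn : Set.InjOn ι X
  leaf_iff : ∀ v : V, (tree.neighborSet v).ncard = 1 ↔ v ∈ ι '' X
  no_deg_two : ∀ v : V, (tree.neighborSet v).ncard ≠ 2

namespace XTree

variable {α : Type} {X : Set α}

/-- A vertex is interior if it is not a leaf. -/
def IsInterior (T : XTree α X) (v : T.V) : Prop := v ∉ T.ι '' X

/-- Fully-resolved: every interior vertex has degree 3. -/
def IsFullyResolved (T : XTree α X) : Prop :=
  ∀ v : T.V, T.IsInterior v → (T.tree.neighborSet v).ncard = 3

/-- The unique path between two vertices of the tree. -/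
noncomputable def treePath (T : XTree α X) (u v : T.V) : T.tree.Walk u v :=
  (T.isTree.existsUnique_path u v).exists.choose

lemma treePath_isPath (T : XTree α X) (u v : T.V) : (T.treePath u v).IsPath :=
  (T.isTree.existsUnique_path u v).exists.choose_spec

/-- Weighted path distance between two vertices. -/
noncomputable def pathDist (T : XTree α X) (w : Sym2 T.V → ℝ) (u v : T.V) : ℝ :=
  ((T.treePath u v).edges.map w).sum

lemma treePath_symm (T : XTree α X) (u v : T.V) :
    T.treePath u v = (T.treePath v u).reverse :=
  (T.isTree.existsUnique_path u v).unique (T.treePath_isPath u v)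
    ((T.treePath_isPath v u).reverse)

lemma pathDist_symm (T : XTree α X) (w : Sym2 T.V → ℝ) (u v : T.V) :
    T.pathDist w u v = T.pathDist w v u := by
  unfold pathDist
  rw [treePath_symm, SimpleGraph.Walk.edges_reverse, List.map_reverse, List.sum_reverse]

/-- The induced distance on pairs of leaf labels. -/
noncomputable def cordDist (T : XTree α X) (w : Sym2 T.V → ℝ) : Sym2 α → ℝ :=
  Sym2.lift ⟨fun a b => T.pathDist w (T.ι a) (T.ι b),
    fun a b => T.pathDist_symm w (T.ι a) (T.ι b)⟩

/-- An edge-weighting assigns a nonnegative weight to every edge. -/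
def IsEdgeWeighting (T : XTree α X) (w : Sym2 T.V → ℝ) : Prop :=
  ∀ e ∈ T.tree.edgeSet, 0 ≤ w e

/-- A proper edge-weighting gives positive weight to every interior edge
(i.e. every edge not incident with a leaf). -/
def IsProperWeighting (T : XTree α X) (w : Sym2 T.V → ℝ) : Prop :=
  T.IsEdgeWeighting w ∧ ∀ e ∈ T.tree.edgeSet, (∀ v ∈ e, T.IsInterior v) → 0 < w e

/-- The set of cords (2-element subsets) of `X`. -/
def cords (X : Set α) : Set (Sym2 α) := {c | ¬ c.IsDiag ∧ ∀ a ∈ c, a ∈ X}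

/-- Two weighted trees are `L`-isometric if their leaf distances agree on `L`. -/
def LIsometric (T : XTree α X) (w : Sym2 T.V → ℝ) (T' : XTree α X) (w' : Sym2 T'.V → ℝ)
    (L : Set (Sym2 α)) : Prop :=
  ∀ c ∈ L, T.cordDist w c = T'.cordDist w' c

/-- `L` is an edge-weight lasso for `T`. -/
def IsEdgeWeightLasso (T : XTree α X) (L : Set (Sym2 α)) : Prop :=
  ∀ w w' : Sym2 T.V → ℝ, T.IsProperWeighting w → T.IsProperWeighting w' →
    LIsometric T w T w' L → ∀ e ∈ T.tree.edgeSet, w e = w' e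

/-- Two `X`-trees are equivalent if there is a graph isomorphism fixing `X`. -/
def Equivalent (T T' : XTree α X) : Prop :=
  ∃ φ : T.tree ≃g T'.tree, ∀ a ∈ X, φ (T.ι a) = T'.ι a

/-- `L` is a topological lasso for `T`. -/
def IsTopologicalLasso (T : XTree α X) (L : Set (Sym2 α)) : Prop :=
  ∀ (T' : XTree α X) (w : Sym2 T.V → ℝ) (w' : Sym2 T'.V → ℝ),
    T.IsProperWeighting w → T'.IsProperWeighting w' →
    LIsometric T w T' w' L → Equivalent T T'

/-- `L` is a strong lasso for `T`. -/
def IsStrongLasso (T : XTree α X) (L : Set (Sym2 α)) : Prop :=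
  IsEdgeWeightLasso T L ∧ IsTopologicalLasso T L

/-- The set of leaf labels on the side of edge `e` containing endpoint `u`. -/
def sideSet (T : XTree α X) (e : Sym2 T.V) (u : T.V) : Set α :=
  {a | a ∈ X ∧ (T.tree.deleteEdges {e}).Reachable (T.ι a) u}

/-- The clusters of `T`: leaf sets of the two components of `T - e`, over all edges `e`. -/
def clus (T : XTree α X) : Set (Set α) :=
  {A | ∃ e ∈ T.tree.edgeSet, ∃ u ∈ e, A = T.sideSet e u}

/-- A stable transversal for a collection of subsets of `α`. -/
def IsStableTransversal (C : Set (Set α)) (f : Set α → α) : Prop :=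
  (∀ A ∈ C, f A ∈ A) ∧ ∀ A ∈ C, ∀ B ∈ C, f A ∈ B → B ⊆ A → f A = f B

/-- Leaf labels of the component of `T - v` containing the vertex `u`. -/
def compSet (T : XTree α X) (v u : T.V) : Set α :=
  {a | a ∈ X ∧ ∃ p : T.tree.Walk (T.ι a) u, v ∉ p.support}

/-- The triplet cover `L_{(T,f)}` generated by a transversal `f`. -/
def tripletCoverOf (T : XTree α X) (f : Set α → α) : Set (Sym2 α) :=
  {c | ∃ v u₁ u₂ : T.V, T.IsInterior v ∧ T.tree.Adj v u₁ ∧ T.tree.Adj v u₂ ∧ u₁ ≠ u₂ ∧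
    c = s(f (T.compSet v u₁), f (T.compSet v u₂))}

/-- `L` is a stable triplet cover of `T`. -/
def IsStableTripletCover (T : XTree α X) (L : Set (Sym2 α)) : Prop :=
  ∃ f : Set α → α, IsStableTransversal (clus T) f ∧ L = tripletCoverOf T f

/-- `T|{a,b,c,d}` is the quartet tree `ab||cd`: the four leaves are distinct members
of `X` and the path from `a` to `b` is vertex-disjoint from the path from `c` to `d`. -/
def Quartet (T : XTree α X) (a b c d : α) : Prop :=
  a ∈ X ∧ b ∈ X ∧ c ∈ X ∧ d ∈ X ∧ List.Pairwise (· ≠ ·) [a, b, c, d] ∧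
  ∀ (p : T.tree.Walk (T.ι a) (T.ι b)) (q : T.tree.Walk (T.ι c) (T.ι d)),
    p.IsPath → q.IsPath → ∀ v, v ∈ p.support → v ∉ q.support

/-- The cord `c` admits pivots relative to already-available cords `L ∪ earlier`. -/
def HasPivots (T : XTree α X) (L : Set (Sym2 α)) (earlier : List (Sym2 α))
    (c : Sym2 α) : Prop :=
  ∃ a b p q : α, c = s(a, b) ∧ Quartet T a p q b ∧
    ∀ c' ∈ [s(a, p), s(a, q), s(b, p), s(b, q), s(p, q)], c' ∈ L ∨ c' ∈ earlier

/-- `ord` is a shellable ordering of `cords X - L` with respect to `T`. -/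
def IsShellableOrdering (T : XTree α X) (L : Set (Sym2 α)) (ord : List (Sym2 α)) : Prop :=
  ord.Nodup ∧ (∀ c, c ∈ ord ↔ c ∈ cords X \ L) ∧
  ∀ i (h : i < ord.length), HasPivots T L (ord.take i) (ord.get ⟨i, h⟩)

/-- `L` is a shellable lasso for `T`: `L ⊆ cords X`, every element of `X` occurs in some
cord of `L`, and `cords X - L` admits a shellable ordering. -/
def IsShellableLasso (T : XTree α X) (L : Set (Sym2 α)) : Prop :=
  L ⊆ cords X ∧ (∀ a ∈ X, ∃ c ∈ L, a ∈ c) ∧ ∃ ord, IsShellableOrdering T L ord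

/-- The graph `(Xs, L)` is a 2d-tree. -/
def Is2dTree (Xs : Set α) (L : Set (Sym2 α)) : Prop :=
  ∃ ord : List α, ord.Nodup ∧ (∀ a, a ∈ ord ↔ a ∈ Xs) ∧
    ∃ h2 : 2 ≤ ord.length,
      s(ord.get ⟨0, by omega⟩, ord.get ⟨1, by omega⟩) ∈ L ∧
      ∀ i (h : i < ord.length), 2 ≤ i →
        {b | b ∈ ord.take i ∧ s(ord.get ⟨i, h⟩, b) ∈ L}.ncard = 2

/-- Leaves `x` and `y` form a cherry of `T`. -/
def IsCherry (T : XTree α X) (x y : α) : Prop :=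
  x ≠ y ∧ x ∈ X ∧ y ∈ X ∧ ∃ v : T.V, T.tree.Adj (T.ι x) v ∧ T.tree.Adj (T.ι y) v

/-- `T'` is (equivalent to) the restriction `T|Y` of `T` to `Y ⊆ X`, characterized by the
fact that the clusters of `T|Y` are exactly the nonempty proper restrictions to `Y`
of clusters of `T`. -/
def IsRestrictionOf {Y : Set α} (T' : XTree α Y) (T : XTree α X) : Prop :=
  Y ⊆ X ∧ clus T' = {A | (∃ B ∈ clus T, A = B ∩ Y) ∧ A.Nonempty ∧ A ≠ Y}

open Classical in
/-- One application of the extension rule (R), acting on a state consisting of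
the current set of cords together with the current distance values. -/
def RStep (Xs : Set α) (S S' : Set (Sym2 α) × (Sym2 α → ℝ)) : Prop :=
  ∃ x y u z : α, x ∈ Xs ∧ y ∈ Xs ∧ u ∈ Xs ∧ z ∈ Xs ∧
    List.Pairwise (· ≠ ·) [x, y, u, z] ∧
    s(x, y) ∈ S.1 ∧ s(y, u) ∈ S.1 ∧ s(y, z) ∈ S.1 ∧ s(x, u) ∈ S.1 ∧ s(u, z) ∈ S.1 ∧
    s(x, z) ∉ S.1 ∧
    S.2 s(x, y) + S.2 s(u, z) < S.2 s(x, u) + S.2 s(y, z) ∧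
    S'.1 = insert s(x, z) S.1 ∧
    S'.2 = Function.update S.2 s(x, z) (S.2 s(x, u) + S.2 s(y, z) - S.2 s(y, u))

/-- `S` is the result `cl_R(L)` (with its `d`-values) of exhaustively applying rule (R)
starting from `L` with initial distance values `d`. -/
def IsRClosureOf (Xs : Set α) (L : Set (Sym2 α)) (d : Sym2 α → ℝ)
    (S : Set (Sym2 α) × (Sym2 α → ℝ)) : Prop :=
  Relation.ReflTransGen (RStep Xs) (L, d) S ∧ ∀ S', ¬ RStep Xs S S'

end XTree

/-!
If the cluster `B` induced by the edge `u'v'` is strictly contained in the cluster `A` induced by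
`uv`, then `u` lies on the far side of `u'v'`, so every leaf of `B` is farther from `u` than from
`u'` by the same amount `d(u', u)`. Hence a furthest leaf of `A` lying in `B` is also a furthest
leaf of `B`, and `B_w ⊆ A_w`; stability of `g` then gives `g(A_w) = g(B_w)`.
-/

namespace SimpleGraph

variable {V : Type*} {G : SimpleGraph V}

lemma Reachable.reachable_deleteEdges_or {x u : V} (v : V) (h : G.Reachable x u) :
    (G.deleteEdges {s(u, v)}).Reachable x u ∨ (G.deleteEdges {s(u, v)}).Reachable x v := by
  classical
  obtain ⟨p, hp⟩ := h.exists_isPath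
  by_cases huv : s(u, v) ∈ p.edges
  · have hv := p.snd_mem_support_of_mem_edges huv
    have hu := Walk.endpoint_notMem_support_takeUntil hp hv (p.adj_of_mem_edges huv).ne
    exact .inr (reachable_deleteEdges_iff_exists_walk.2
      ⟨p.takeUntil v hv, fun h => hu ((p.takeUntil v hv).fst_mem_support_of_mem_edges h)⟩)
  · exact .inl (reachable_deleteEdges_iff_exists_walk.2 ⟨p, huv⟩)

lemma Reachable.reachable_deleteEdges_of_not_reachable {s : Set (Sym2 V)} {x y u : V} (v : V)
    (h : (G.deleteEdges s).Reachable x y) (hu : ¬ (G.deleteEdges s).Reachable u y) :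
    (G.deleteEdges {s(u, v)}).Reachable x y := by
  classical
  obtain ⟨p⟩ := h
  refine reachable_deleteEdges_iff_exists_walk.2 ⟨p.mapLe (deleteEdges_le s), fun he => ?_⟩
  rw [Walk.edges_mapLe_eq_edges] at he
  exact hu ⟨p.dropUntil u (p.fst_mem_support_of_mem_edges he)⟩

lemma IsAcyclic.exists_reachable_neighborSet_subsingleton [Finite V] (hG : G.IsAcyclic) (u : V) :
    ∃ z, G.Reachable u z ∧ (G.neighborSet z).Subsingleton := by
  have := Fintype.ofFinite V
  have hfin : {n | ∃ z, ∃ p : G.Walk u z, p.IsPath ∧ p.length = n}.Finite :=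
    (Set.finite_lt_nat (Fintype.card V)).subset fun _ ⟨_, _, hp, hn⟩ => hn ▸ hp.length_lt
  obtain ⟨_, ⟨z, p, hp, rfl⟩, hmax⟩ := hfin.exists_maximal ⟨0, u, .nil, .nil, rfl⟩
  have hsupp : ∀ y, G.Adj z y → y ∈ p.support := fun y hzy => by
    by_contra hy
    simpa using hmax ⟨y, _, hp.concat hy hzy, rfl⟩
  exact ⟨z, ⟨p⟩, fun y₁ h₁ y₂ h₂ => (hG.eq_penultimate_of_adj_end hp h₁ (hsupp _ h₁)).trans
    (hG.eq_penultimate_of_adj_end hp h₂ (hsupp _ h₂)).symm⟩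

end SimpleGraph

section argmaxSet

variable {α β : Type*}

def argmaxSet [Preorder β] (A : Set α) (d : α → β) : Set α := {a | a ∈ A ∧ ∀ b ∈ A, d b ≤ d a}

lemma argmaxSet_subset [Preorder β] (A : Set α) (d : α → β) : argmaxSet A d ⊆ A := fun _ h => h.1

lemma Set.Finite.argmaxSet_nonempty [LinearOrder β] {A : Set α} (hA : A.Finite)
    (hne : A.Nonempty) (d : α → β) : (argmaxSet A d).Nonempty :=
  let ⟨a, ha, hmax⟩ := Set.exists_max_image A d hA hne
  ⟨a, ha, hmax⟩

variable [Preorder β] {A B : Set α} {dA dB : α → β}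

lemma mem_argmaxSet_of_subset (hBA : B ⊆ A) (hd : ∀ b ∈ B, ∀ c ∈ B, dA b ≤ dA c ↔ dB b ≤ dB c)
    {x : α} (hx : x ∈ argmaxSet A dA) (hxB : x ∈ B) : x ∈ argmaxSet B dB :=
  ⟨hxB, fun b hb => (hd b hb x hxB).1 (hx.2 b (hBA hb))⟩

lemma argmaxSet_subset_argmaxSet (hBA : B ⊆ A)
    (hd : ∀ b ∈ B, ∀ c ∈ B, dA b ≤ dA c ↔ dB b ≤ dB c) {x : α} (hx : x ∈ argmaxSet A dA)
    (hxB : x ∈ B) : argmaxSet B dB ⊆ argmaxSet A dA :=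
  fun b hb => ⟨hBA hb.1, fun a ha => (hx.2 a ha).trans ((hd x hxB b hb.1).2 (hb.2 x hxB))⟩

end argmaxSet

namespace XTree

variable {α : Type} {X : Set α} {T : XTree α X} {u v u' v' : T.V}

lemma IsStableTransversal.apply_argmaxSet_eq {β : Type*} [Preorder β] {A B : Set α}
    {dA dB : α → β} {g : Set α → α}
    (hg : IsStableTransversal {S : Set α | S ⊆ X ∧ S.Nonempty} g) (hAX : A ⊆ X)
    (hA : (argmaxSet A dA).Nonempty) (hBA : B ⊆ A)
    (hd : ∀ b ∈ B, ∀ c ∈ B, dA b ≤ dA c ↔ dB b ≤ dB c) (hgB : g (argmaxSet A dA) ∈ B) :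
    g (argmaxSet A dA) = g (argmaxSet B dB) := by
  have hAC : argmaxSet A dA ∈ {S : Set α | S ⊆ X ∧ S.Nonempty} :=
    ⟨(argmaxSet_subset A dA).trans hAX, hA⟩
  have hgA := hg.1 _ hAC
  have hgB' := mem_argmaxSet_of_subset hBA hd hgA hgB
  exact hg.2 _ hAC _ ⟨(argmaxSet_subset B dB).trans (hBA.trans hAX), _, hgB'⟩ hgB'
    (argmaxSet_subset_argmaxSet hBA hd hgA hgB)

lemma finite (T : XTree α X) : X.Finite :=
  have := T.fintypeV
  Set.Finite.of_finite_image (Set.toFinite _) T.ι_injOn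

lemma mem_clus {A : Set α} : A ∈ T.clus ↔ ∃ u v, T.tree.Adj u v ∧ A = T.sideSet s(u, v) u := by
  refine ⟨fun ⟨e, he, u, hu, hA⟩ => ?_, fun ⟨u, v, h, hA⟩ => ⟨_, h, u, Sym2.mem_mk_left _ _, hA⟩⟩
  obtain ⟨v, rfl⟩ := Sym2.mem_iff_exists.mp hu
  exact ⟨u, v, he, hA⟩

lemma not_reachable_deleteEdges (h : T.tree.Adj u v) :
    ¬ (T.tree.deleteEdges {s(u, v)}).Reachable u v :=
  isAcyclic_iff_forall_adj_isBridge.mp T.isTree.isAcyclic h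

/-- The far end of a longest path from `u` avoiding the edge has degree at most two in `T`, hence
degree one. -/
lemma sideSet_nonempty (h : T.tree.Adj u v) : (T.sideSet s(u, v) u).Nonempty := by
  have := T.fintypeV
  obtain ⟨z, huz, hz⟩ :=
    (T.isTree.isAcyclic.anti (deleteEdges_le {s(u, v)})).exists_reachable_neighborSet_subsingleton u
  have hzv : z ≠ v := by
    rintro rfl
    exact not_reachable_deleteEdges h huz
  have hsub : T.tree.neighborSet z ⊆ insert v ((T.tree.deleteEdges {s(u, v)}).neighborSet z) := by
    intro y hy
    by_cases hzy : s(z, y) = s(u, v)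
    · rcases Sym2.eq_iff.mp hzy with ⟨-, rfl⟩ | ⟨rfl, -⟩
      exacts [Set.mem_insert _ _, absurd rfl hzv]
    · exact Set.mem_insert_of_mem _ ((deleteEdges_adj ..).mpr ⟨hy, hzy⟩)
  have hle : (T.tree.neighborSet z).ncard ≤ 2 :=
    calc (T.tree.neighborSet z).ncard
        ≤ (insert v ((T.tree.deleteEdges {s(u, v)}).neighborSet z)).ncard :=
          Set.ncard_le_ncard hsub
      _ ≤ ((T.tree.deleteEdges {s(u, v)}).neighborSet z).ncard + 1 := Set.ncard_insert_le _ _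
      _ ≤ 2 := by grw [Set.ncard_le_one_iff_subsingleton.mpr hz]
  have hpos : 0 < (T.tree.neighborSet z).ncard := by
    obtain ⟨p⟩ := T.isTree.connected.preconnected z v
    exact (Set.ncard_pos (Set.toFinite _)).mpr ⟨_, p.adj_snd (Walk.not_nil_of_ne hzv)⟩
  obtain ⟨a, ha, rfl⟩ := (T.leaf_iff z).mp (by have := T.no_deg_two z; omega)
  exact ⟨a, ha, huz.symm⟩

lemma pathDist_eq_sum_of_isPath (w : Sym2 T.V → ℝ) {x y : T.V} {p : T.tree.Walk x y}
    (hp : p.IsPath) : T.pathDist w x y = (p.edges.map w).sum := by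
  rw [pathDist, (T.isTree.existsUnique_path x y).unique (T.treePath_isPath x y) hp]

lemma pathDist_eq_add_of_mem_support (w : Sym2 T.V → ℝ) {x y z : T.V}
    (hy : y ∈ (T.treePath x z).support) :
    T.pathDist w x z = T.pathDist w x y + T.pathDist w y z := by
  classical
  have hp := T.treePath_isPath x z
  rw [T.pathDist_eq_sum_of_isPath w (hp.takeUntil hy), T.pathDist_eq_sum_of_isPath w
    (hp.dropUntil hy), pathDist, ← List.sum_append, ← List.map_append, ← Walk.edges_append,
    Walk.take_spec]

lemma pathDist_eq_add_of_reachable_deleteEdges (w : Sym2 T.V → ℝ) (h : T.tree.Adj u v)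
    {x z : T.V} (hx : (T.tree.deleteEdges {s(u, v)}).Reachable x u)
    (hz : (T.tree.deleteEdges {s(u, v)}).Reachable z v) :
    T.pathDist w x z = T.pathDist w x u + T.pathDist w u z := by
  have hxz : ¬ (T.tree.deleteEdges {s(u, v)}).Reachable x z := fun hxz =>
    not_reachable_deleteEdges h (hx.symm.trans (hxz.trans hz))
  exact T.pathDist_eq_add_of_mem_support w ((T.treePath x z).fst_mem_support_of_mem_edges
    ((T.treePath x z).mem_edges_of_not_reachable_deleteEdges hxz))

/-- Were `u` on the `u'`-side of `u'v'`, then according to the side of `uv` containing `u'`,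
either a leaf on the `v`-side of `uv` would lie in `B \ A`, or `A ⊆ B`. -/
lemma reachable_deleteEdges_of_sideSet_ssubset (h : T.tree.Adj u v) (h' : T.tree.Adj u' v')
    (hBA : T.sideSet s(u', v') u' ⊂ T.sideSet s(u, v) u) :
    (T.tree.deleteEdges {s(u', v')}).Reachable u v' := by
  refine ((T.isTree.connected.preconnected u u').reachable_deleteEdges_or v').resolve_left
    fun hu => ?_
  have hv : (T.tree.deleteEdges {s(u', v')}).Reachable v u' := by
    by_cases he : s(u, v) = s(u', v')
    · rcases Sym2.eq_iff.mp he with ⟨rfl, rfl⟩ | ⟨rfl, rfl⟩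
      exacts [absurd rfl hBA.ne, .rfl]
    · have hvu : (T.tree.deleteEdges {s(u', v')}).Adj v u :=
        (deleteEdges_adj ..).mpr ⟨h.symm, fun h => he (Sym2.eq_swap.trans h)⟩
      exact hvu.reachable.trans hu
  rcases (T.isTree.connected.preconnected u' u).reachable_deleteEdges_or v with hu' | hu'
  · obtain ⟨a, haX, ha⟩ := sideSet_nonempty h.symm
    rw [Sym2.eq_swap] at ha
    have haB : a ∈ T.sideSet s(u', v') u' := ⟨haX,
      (ha.reachable_deleteEdges_of_not_reachable v' fun hu'v => not_reachable_deleteEdges h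
        (hu'.symm.trans hu'v)).trans hv⟩
    exact not_reachable_deleteEdges h ((hBA.subset haB).2.symm.trans ha)
  · refine hBA.not_subset fun a ⟨haX, ha⟩ => ⟨haX, ?_⟩
    exact (ha.reachable_deleteEdges_of_not_reachable v' fun hu'u => not_reachable_deleteEdges h
      (hu'u.symm.trans hu')).trans hu

end XTree

open XTree in
theorem furthest_leaves_stable_transversal_general {α : Type} (X : Set α) (T : XTree α X)
    (w : Sym2 T.V → ℝ)
    (g : Set α → α) (hg : IsStableTransversal {A : Set α | A ⊆ X ∧ A.Nonempty} g)
    (f : Set α → α)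
    (hf : ∀ A ∈ clus T, ∀ e ∈ T.tree.edgeSet, ∀ u, u ∈ e → A = T.sideSet e u →
      f A = g {a | a ∈ A ∧ ∀ b ∈ A, T.pathDist w (T.ι b) u ≤ T.pathDist w (T.ι a) u}) :
    IsStableTransversal (clus T) f := by
  have hfA : ∀ u v, T.tree.Adj u v → f (T.sideSet s(u, v) u) =
      g (argmaxSet (T.sideSet s(u, v) u) fun a => T.pathDist w (T.ι a) u) := fun u v h =>
    hf _ (mem_clus.2 ⟨u, v, h, rfl⟩) _ h u (Sym2.mem_mk_left u v) rfl
  have hne : ∀ u v, T.tree.Adj u v →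
      (argmaxSet (T.sideSet s(u, v) u) fun a => T.pathDist w (T.ι a) u).Nonempty := fun u v h =>
    (T.finite.subset fun _ ha => ha.1).argmaxSet_nonempty (sideSet_nonempty h) _
  refine ⟨fun A hA => ?_, fun A hA B hB hfB hBA => ?_⟩
  · obtain ⟨u, v, h, rfl⟩ := mem_clus.1 hA
    rw [hfA u v h]
    exact argmaxSet_subset _ _ (hg.1 _ ⟨fun a ha => ha.1.1, hne u v h⟩)
  obtain ⟨u, v, h, rfl⟩ := mem_clus.1 hA
  obtain ⟨u', v', h', rfl⟩ := mem_clus.1 hB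
  rcases hBA.eq_or_ssubset with hAB | hBA'
  · rw [hAB]
  have hv' := reachable_deleteEdges_of_sideSet_ssubset h h' hBA'
  rw [hfA u v h] at hfB ⊢
  rw [hfA u' v' h']
  refine hg.apply_argmaxSet_eq (fun a ha => ha.1) (hne u v h) hBA (fun b hb c hc => ?_) hfB
  rw [pathDist_eq_add_of_reachable_deleteEdges w h' hb.2 hv',
    pathDist_eq_add_of_reachable_deleteEdges w h' hc.2 hv', add_le_add_iff_right]

open XTree in
/-- Let `T` be a fully-resolved `X`-tree with a proper edge-weighting `w`
and `g` a stable transversal for the collection of all nonempty subsets of `X`. If, for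
each cluster `A ∈ clus(T)` with inducing edge `e` (whose endpoint on the `A`-side is
`u`), `f(A) = g(A_w)` where `A_w` is the set of leaves of `A` furthest from `e`, then
`f` is a stable transversal for `clus(T)`. -/
theorem furthest_leaves_stable_transversal {α : Type} (X : Set α) (hfin : X.Finite)
    (hcard : 3 ≤ X.ncard) (T : XTree α X) (hT : T.IsFullyResolved)
    (w : Sym2 T.V → ℝ) (hw : T.IsProperWeighting w)
    (g : Set α → α) (hg : IsStableTransversal {A : Set α | A ⊆ X ∧ A.Nonempty} g)
    (f : Set α → α)
    (hf : ∀ A ∈ clus T, ∀ e ∈ T.tree.edgeSet, ∀ u, u ∈ e → A = T.sideSet e u →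
      f A = g {a | a ∈ A ∧ ∀ b ∈ A, T.pathDist w (T.ι b) u ≤ T.pathDist w (T.ι a) u}) :
    IsStableTransversal (clus T) f :=
  furthest_leaves_stable_transversal_general X T w g hg f hf
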